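/- Let W : GL⁺(3,ℝ) → [0,∞) be a C¹ strain energy function that is objective and isotropic, with Piola–Kirchhoff stress S, and let L(λ) = W(F(λ,ω)) (which is independent of ω). Then for all λ ∈ ℝ₊² and ω ∈ S²: S(F(λ,ω)) = L,₁(λ) P₁(ω) + (1/2) L,₂(λ) P₂(ω), and the Cauchy stress T(F) = (det F)^{−1} S(F) Fᵀ satisfies T(F(λ,ω)) = (λ₁λ₂²)^{−1} [ λ₁ L,₁(λ) P₁(ω) + (1/2) λ₂ L,₂(λ) P₂(ω) ]. -/

import Mathlib

open Matrix Set MeasureTheory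

noncomputable section

attribute [local instance] Matrix.normedAddCommGroup Matrix.normedSpace

abbrev Mat3 := Matrix (Fin 3) (Fin 3) ℝ
abbrev V3 := EuclideanSpace ℝ (Fin 3)

def GLpos (F : Mat3) : Prop := 0 < F.det

def Objective (W : Mat3 → ℝ) : Prop :=
  ∀ F : Mat3, GLpos F → ∀ U : Mat3, U * Uᵀ = 1 → U.det = 1 → W (U * F) = W F

def Isotropic (W : Mat3 → ℝ) : Prop :=
  ∀ F : Mat3, GLpos F → ∀ U : Mat3, U * Uᵀ = 1 → U.det = 1 → W (F * U) = W F

def HomDeg (W : Mat3 → ℝ) (h : ℝ) : Prop :=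
  ∀ F : Mat3, GLpos F → ∀ σ : ℝ, 0 < σ → W (σ • F) = σ ^ h * W F

noncomputable def PK (W : Mat3 → ℝ) (F : Mat3) : Mat3 :=
  Matrix.of fun i j => fderiv ℝ W F (Matrix.single i j 1)

noncomputable def jac (φ : V3 → V3) (y : V3) : Mat3 :=
  Matrix.of fun i j => fderiv ℝ (fun z => φ z i) y (EuclideanSpace.single j 1)

noncomputable def jacIn (φ : V3 → V3) (s : Set V3) (y : V3) : Mat3 :=
  Matrix.of fun i j => fderivWithin ℝ (fun z => φ z i) s y (EuclideanSpace.single j 1)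

noncomputable def divMat (S : V3 → Mat3) (y : V3) : V3 :=
  WithLp.toLp 2 fun i => ∑ j : Fin 3, fderiv ℝ (fun z => S z i j) y (EuclideanSpace.single j 1)

noncomputable def P1 (ω : V3) : Mat3 := Matrix.vecMulVec (fun i => ω i) (fun i => ω i)

noncomputable def P2 (ω : V3) : Mat3 := 1 - P1 ω

noncomputable def Fmat (l1 l2 : ℝ) (ω : V3) : Mat3 := l1 • P1 ω + l2 • P2 ω

open scoped Classical in
/-- The spherically symmetric map `y ↦ φ(|y|) y/|y|` (with value `0` at `y = 0`). -/
noncomputable def sphMap (φ : ℝ → ℝ) (y : V3) : V3 :=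
  if y = 0 then 0 else (φ ‖y‖ / ‖y‖) • y

/-- The restriction `L(λ₁,λ₂) = W(F(λ,ω))` of `W` to spherically symmetric deformation
gradients (computed with the fixed direction `ω₀ = e₁`, on which it does not depend). -/
noncomputable def Lfun (W : Mat3 → ℝ) (l1 l2 : ℝ) : ℝ :=
  W (Fmat l1 l2 (EuclideanSpace.single 0 1))

/-!
Objectivity and isotropy make `W` invariant under conjugation `F ↦ Q F Qᵀ` by rotations, so by
the chain rule the stress is equivariant: `S(Q F Qᵀ) = Q S(F) Qᵀ`. A rotation taking `e₀` to `ω`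
reduces everything to `F(λ, e₀) = diag(λ₁, λ₂, λ₂)`. Its stress is invariant under conjugation by
the half-turns about the first two coordinate axes and the quarter-turn about the first one, which
forces `S = a P₁ + b P₂`; differentiating `L` along `P₁` and `P₂` gives `a = L,₁` and `2 b = L,₂`.
The Cauchy stress then follows because `P₁, P₂` are complementary orthogonal projections and
`det F(λ, ω) = λ₁ λ₂²`.
-/

lemma isOpen_setOf_GLpos : IsOpen {F : Mat3 | GLpos F} :=
  isOpen_lt continuous_const continuous_id.matrix_det

lemma GLpos.conj {Q X : Mat3} (hdQ : Q.det = 1) (hX : GLpos X) : GLpos (Q * X * Qᵀ) := by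
  simpa [GLpos, Matrix.det_mul, hdQ] using hX

lemma DifferentiableAt.hasDerivAt_comp_add_smul {E : Type*} [NormedAddCommGroup E] [NormedSpace ℝ E]
    {f : E → ℝ} {A H : E} {t : ℝ} (hf : DifferentiableAt ℝ f (A + t • H)) :
    HasDerivAt (fun s : ℝ => f (A + s • H)) (fderiv ℝ f (A + t • H) H) t := by
  have hline : HasDerivAt (fun s : ℝ => A + s • H) H t := by
    simpa using ((hasDerivAt_id t).smul_const H).const_add A
  exact hf.hasFDerivAt.comp_hasDerivAt t hline

lemma fderiv_apply_eq_sum_PK (W : Mat3 → ℝ) (F H : Mat3) :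
    fderiv ℝ W F H = ∑ i, ∑ j, PK W F i j * H i j := by
  conv_lhs => rw [Matrix.matrix_eq_sum_single H]
  have hsingle : ∀ i j, Matrix.single i j (H i j) = H i j • Matrix.single i j (1 : ℝ) := by
    simp [Matrix.smul_single]
  simp only [map_sum, hsingle, map_smul, smul_eq_mul, PK, Matrix.of_apply, mul_comm]

section

variable {W : Mat3 → ℝ}

lemma differentiableAt_of_GLpos (hWC1 : ContDiffOn ℝ 1 W {F : Mat3 | GLpos F}) {F : Mat3}
    (hF : GLpos F) : DifferentiableAt ℝ W F :=
  (hWC1.contDiffAt (isOpen_setOf_GLpos.mem_nhds hF)).differentiableAt one_ne_zero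

lemma Objective.apply_conj_eq (hobj : Objective W) (hiso : Isotropic W) {Q X : Mat3}
    (hQ : Q * Qᵀ = 1) (hdQ : Q.det = 1) (hX : GLpos X) : W (Q * X * Qᵀ) = W X := by
  have hdQt : Qᵀ.det = 1 := by rwa [Matrix.det_transpose]
  have hXQ : GLpos (X * Qᵀ) := by simpa [GLpos, Matrix.det_mul, hdQt] using hX
  rw [mul_assoc, hobj _ hXQ Q hQ hdQ,
    hiso X hX Qᵀ (by rw [Matrix.transpose_transpose]; exact mul_eq_one_comm.mp hQ) hdQt]

def conjCLM (Q : Mat3) : Mat3 →L[ℝ] Mat3 :=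
  LinearMap.toContinuousLinearMap ((LinearMap.mulRight ℝ Qᵀ).comp (LinearMap.mulLeft ℝ Q))

@[simp] lemma conjCLM_apply (Q H : Mat3) : conjCLM Q H = Q * H * Qᵀ := rfl

lemma fderiv_eq_fderiv_conj_comp (hWC1 : ContDiffOn ℝ 1 W {F : Mat3 | GLpos F})
    (hobj : Objective W) (hiso : Isotropic W) {Q G : Mat3} (hQ : Q * Qᵀ = 1) (hdQ : Q.det = 1)
    (hG : GLpos G) : fderiv ℝ W G = (fderiv ℝ W (Q * G * Qᵀ)).comp (conjCLM Q) := by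
  have hcomp : HasFDerivAt (W ∘ conjCLM Q) ((fderiv ℝ W (Q * G * Qᵀ)).comp (conjCLM Q)) G :=
    (differentiableAt_of_GLpos hWC1 (hG.conj hdQ)).hasFDerivAt.comp G (conjCLM Q).hasFDerivAt
  have heq : W ∘ conjCLM Q =ᶠ[nhds G] W := by
    filter_upwards [isOpen_setOf_GLpos.mem_nhds hG] with X hX
    exact hobj.apply_conj_eq hiso hQ hdQ hX
  exact (hcomp.congr_of_eventuallyEq heq.symm).fderiv

lemma PK_conj (hWC1 : ContDiffOn ℝ 1 W {F : Mat3 | GLpos F})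
    (hobj : Objective W) (hiso : Isotropic W) {Q G : Mat3} (hQ : Q * Qᵀ = 1) (hdQ : Q.det = 1)
    (hG : GLpos G) : PK W (Q * G * Qᵀ) = Q * PK W G * Qᵀ := by
  ext i j
  have hE : Q * (Qᵀ * Matrix.single i j 1 * Q) * Qᵀ = Matrix.single i j (1 : ℝ) := by
    simp only [← mul_assoc, hQ, one_mul]
    rw [mul_assoc, hQ, mul_one]
  calc PK W (Q * G * Qᵀ) i j
      = fderiv ℝ W G (Qᵀ * Matrix.single i j 1 * Q) := by
        rw [fderiv_eq_fderiv_conj_comp hWC1 hobj hiso hQ hdQ hG, ContinuousLinearMap.comp_apply,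
          conjCLM_apply, hE]; rfl
    _ = (Q * PK W G * Qᵀ) i j := by
        simp only [fderiv_apply_eq_sum_PK, Matrix.mul_apply, Matrix.transpose_apply,
          Matrix.single_apply, Finset.sum_mul, mul_ite, ite_mul, mul_one, mul_zero,
          zero_mul, ite_and, Finset.sum_ite_eq, Finset.mem_univ, if_true]
        rw [Finset.sum_comm]
        exact Finset.sum_congr rfl fun _ _ => Finset.sum_congr rfl fun _ _ => by ring

local notation "e₀" => (EuclideanSpace.single 0 1 : V3)

lemma P1_e₀ : P1 e₀ = !![1, 0, 0; 0, 0, 0; 0, 0, 0] := by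
  ext i j
  fin_cases i <;> fin_cases j <;> simp [P1, Matrix.vecMulVec_apply]

lemma P2_e₀ : P2 e₀ = !![0, 0, 0; 0, 1, 0; 0, 0, 1] := by
  ext i j
  fin_cases i <;> fin_cases j <;> simp [P2, P1_e₀]

def quarterTurnX : Mat3 := !![1, 0, 0; 0, 0, -1; 0, 1, 0]
def halfTurnX : Mat3 := !![1, 0, 0; 0, -1, 0; 0, 0, -1]
def halfTurnY : Mat3 := !![-1, 0, 0; 0, 1, 0; 0, 0, -1]

lemma conj_P2 {Q : Mat3} (hQ : Q * Qᵀ = 1) {v w : V3} (h : Q * P1 v * Qᵀ = P1 w) :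
    Q * P2 v * Qᵀ = P2 w := by
  rw [P2, P2, Matrix.mul_sub, Matrix.sub_mul, Matrix.mul_one, hQ, h]

lemma conj_Fmat {Q : Mat3} (hQ : Q * Qᵀ = 1) {v w : V3} (h : Q * P1 v * Qᵀ = P1 w)
    (l1 l2 : ℝ) : Q * Fmat l1 l2 v * Qᵀ = Fmat l1 l2 w := by
  simp only [Fmat, Matrix.mul_add, Matrix.add_mul, Matrix.mul_smul, Matrix.smul_mul, h,
    conj_P2 hQ h]

lemma stabilizer_P1_e₀ :
    ∀ Q ∈ ({quarterTurnX, halfTurnX, halfTurnY} : Set Mat3),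
      Q * Qᵀ = 1 ∧ Q.det = 1 ∧ Q * P1 e₀ * Qᵀ = P1 e₀ := by
  rintro Q (rfl | rfl | rfl) <;>
    refine ⟨?_, by simp [quarterTurnX, halfTurnX, halfTurnY, Matrix.det_fin_three], ?_⟩ <;>
    ext i j <;> fin_cases i <;> fin_cases j <;>
    simp [quarterTurnX, halfTurnX, halfTurnY, P1_e₀, Matrix.mul_apply, Fin.sum_univ_three]

lemma eq_smul_P1_add_smul_P2_of_conj_eq {S : Mat3}
    (hS : ∀ Q ∈ ({quarterTurnX, halfTurnX, halfTurnY} : Set Mat3), Q * S * Qᵀ = S) :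
    S = S 0 0 • P1 e₀ + S 1 1 • P2 e₀ := by
  ext i j
  have e1 := congrFun₂ (hS quarterTurnX (by simp)) i j
  have e2 := congrFun₂ (hS halfTurnX (by simp)) i j
  have e3 := congrFun₂ (hS halfTurnY (by simp)) i j
  rw [P1_e₀, P2_e₀]
  fin_cases i <;> fin_cases j <;>
    simp [quarterTurnX, halfTurnX, halfTurnY, Matrix.mul_apply, Matrix.vecMul, dotProduct,
      Fin.sum_univ_three] at e1 e2 e3 ⊢ <;>
    linarith

lemma det_Fmat_e₀ (l1 l2 : ℝ) : (Fmat l1 l2 e₀).det = l1 * l2 ^ 2 := by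
  simp [Fmat, P1_e₀, P2_e₀, Matrix.det_fin_three]
  ring

lemma deriv_Lfun_fst (hWC1 : ContDiffOn ℝ 1 W {F : Mat3 | GLpos F}) {l1 l2 : ℝ}
    (hF : GLpos (Fmat l1 l2 e₀)) :
    deriv (fun s => Lfun W s l2) l1 = fderiv ℝ W (Fmat l1 l2 e₀) (P1 e₀) := by
  have hline : ∀ s, Fmat s l2 e₀ = l2 • P2 e₀ + s • P1 e₀ := fun s => add_comm _ _
  simp only [Lfun, hline] at hF ⊢
  exact (differentiableAt_of_GLpos hWC1 hF).hasDerivAt_comp_add_smul.deriv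

lemma deriv_Lfun_snd (hWC1 : ContDiffOn ℝ 1 W {F : Mat3 | GLpos F}) {l1 l2 : ℝ}
    (hF : GLpos (Fmat l1 l2 e₀)) :
    deriv (fun s => Lfun W l1 s) l2 = fderiv ℝ W (Fmat l1 l2 e₀) (P2 e₀) :=
  (differentiableAt_of_GLpos hWC1 hF).hasDerivAt_comp_add_smul.deriv

lemma PK_Fmat_e₀ (hWC1 : ContDiffOn ℝ 1 W {F : Mat3 | GLpos F})
    (hobj : Objective W) (hiso : Isotropic W) {l1 l2 : ℝ} (hl1 : 0 < l1) (hl2 : 0 < l2) :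
    PK W (Fmat l1 l2 e₀)
      = deriv (fun s => Lfun W s l2) l1 • P1 e₀
        + ((1/2) * deriv (fun s => Lfun W l1 s) l2) • P2 e₀ := by
  have hF : GLpos (Fmat l1 l2 e₀) := by rw [GLpos, det_Fmat_e₀]; positivity
  obtain ⟨a, b, hS⟩ : ∃ a b : ℝ, PK W (Fmat l1 l2 e₀) = a • P1 e₀ + b • P2 e₀ := by
    refine ⟨_, _, eq_smul_P1_add_smul_P2_of_conj_eq fun Q hQ => ?_⟩
    obtain ⟨hQQ, hdQ, hQP⟩ := stabilizer_P1_e₀ Q hQ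
    rw [← PK_conj hWC1 hobj hiso hQQ hdQ hF, conj_Fmat hQQ hQP]
  have hL1 : deriv (fun s => Lfun W s l2) l1 = a := by
    rw [deriv_Lfun_fst hWC1 hF, fderiv_apply_eq_sum_PK, hS]
    simp [P1_e₀, P2_e₀, Fin.sum_univ_three]
  have hL2 : deriv (fun s => Lfun W l1 s) l2 = 2 * b := by
    rw [deriv_Lfun_snd hWC1 hF, fderiv_apply_eq_sum_PK, hS]
    simp [P1_e₀, P2_e₀, Fin.sum_univ_three]
    ring
  rw [hS, hL1, hL2, one_div, inv_mul_cancel_left₀ two_ne_zero]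

lemma exists_orthogonal_col_zero_eq {ω : V3} (hω : ‖ω‖ = 1) :
    ∃ R : Mat3, Rᵀ * R = 1 ∧ ∀ i, R i 0 = ω i := by
  have hω' : Orthonormal ℝ (({0} : Set (Fin 3)).domRestrict fun _ => ω) :=
    ⟨fun _ => hω, fun i j hij => absurd (Subtype.ext (i.2.trans j.2.symm)) hij⟩
  obtain ⟨b, hb⟩ := hω'.exists_orthonormalBasis_extension_of_card_eq (by simp)
  refine ⟨Matrix.of fun i j => b j i, ?_, fun i => by simp [hb 0 rfl]⟩
  ext j k
  simpa [Matrix.mul_apply, Matrix.one_apply, PiLp.inner_apply, mul_comm] using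
    orthonormal_iff_ite.mp b.orthonormal j k

lemma exists_rotation_col_zero_eq {ω : V3} (hω : ‖ω‖ = 1) :
    ∃ R : Mat3, R * Rᵀ = 1 ∧ R.det = 1 ∧ ∀ i, R i 0 = ω i := by
  obtain ⟨R, hR, hcol⟩ := exists_orthogonal_col_zero_eq hω
  have hdet : R.det * R.det = 1 := by
    simpa [Matrix.det_mul, Matrix.det_transpose] using congrArg Matrix.det hR
  -- multiplying the last column by `det R = ±1` fixes the orientation
  set c : Fin 3 → ℝ := ![1, 1, R.det]
  have hc : Matrix.diagonal c * Matrix.diagonal c = 1 := by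
    rw [Matrix.diagonal_mul_diagonal, ← Matrix.diagonal_one]
    congr 1; ext i; fin_cases i <;> simp [c, hdet]
  refine ⟨R * Matrix.diagonal c, mul_eq_one_comm.mp ?_, ?_, fun i => by simp [c, hcol]⟩
  · rw [Matrix.transpose_mul, Matrix.diagonal_transpose, mul_assoc, ← mul_assoc Rᵀ, hR, one_mul,
      hc]
  · simp [Matrix.det_mul, Matrix.det_diagonal, Fin.prod_univ_three, c, hdet]

lemma conj_P1_e₀ {R : Mat3} {ω : V3} (hcol : ∀ i, R i 0 = ω i) : R * P1 e₀ * Rᵀ = P1 ω := by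
  rw [P1_e₀]
  ext i j
  simp [P1, Matrix.vecMulVec_apply, Matrix.mul_apply, Fin.sum_univ_three, hcol]

lemma PK_Fmat (hWC1 : ContDiffOn ℝ 1 W {F : Mat3 | GLpos F})
    (hobj : Objective W) (hiso : Isotropic W) {l1 l2 : ℝ} (hl1 : 0 < l1) (hl2 : 0 < l2)
    {ω : V3} (hω : ‖ω‖ = 1) :
    PK W (Fmat l1 l2 ω)
      = deriv (fun s => Lfun W s l2) l1 • P1 ω
        + ((1/2) * deriv (fun s => Lfun W l1 s) l2) • P2 ω := by
  obtain ⟨R, hR, hdR, hcol⟩ := exists_rotation_col_zero_eq hω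
  have hF : GLpos (Fmat l1 l2 e₀) := by rw [GLpos, det_Fmat_e₀]; positivity
  rw [← conj_Fmat hR (conj_P1_e₀ hcol), PK_conj hWC1 hobj hiso hR hdR hF,
    PK_Fmat_e₀ hWC1 hobj hiso hl1 hl2]
  simp only [Matrix.mul_add, Matrix.add_mul, Matrix.mul_smul, Matrix.smul_mul, conj_P1_e₀ hcol,
    conj_P2 hR (conj_P1_e₀ hcol)]

lemma det_Fmat {ω : V3} (hω : ‖ω‖ = 1) (l1 l2 : ℝ) : (Fmat l1 l2 ω).det = l1 * l2 ^ 2 := by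
  obtain ⟨R, hR, hdR, hcol⟩ := exists_rotation_col_zero_eq hω
  rw [← conj_Fmat hR (conj_P1_e₀ hcol), Matrix.det_mul, Matrix.det_mul, Matrix.det_transpose,
    hdR, det_Fmat_e₀, one_mul, mul_one]

lemma transpose_Fmat (l1 l2 : ℝ) (ω : V3) : (Fmat l1 l2 ω)ᵀ = Fmat l1 l2 ω := by
  simp [Fmat, P2, P1, Matrix.transpose_vecMulVec]

lemma P1_mul_P1 {ω : V3} (hω : ‖ω‖ = 1) : P1 ω * P1 ω = P1 ω := by
  have hdot : (fun i => ω i) ⬝ᵥ (fun i => ω i) = 1 := by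
    have h := real_inner_self_eq_norm_sq ω
    rw [hω, PiLp.inner_apply] at h
    simpa [dotProduct, sq] using h
  rw [P1, Matrix.vecMulVec_mul_vecMulVec, hdot, one_smul]

lemma smul_P1_add_smul_P2_mul_Fmat {ω : V3} (hω : ‖ω‖ = 1) (a b l1 l2 : ℝ) :
    (a • P1 ω + b • P2 ω) * Fmat l1 l2 ω = (l1 * a) • P1 ω + (l2 * b) • P2 ω := by
  have h11 := P1_mul_P1 hω
  have h12 : P1 ω * P2 ω = 0 := by rw [P2, Matrix.mul_sub, h11, mul_one, sub_self]
  have h21 : P2 ω * P1 ω = 0 := by rw [P2, Matrix.sub_mul, h11, one_mul, sub_self]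
  have h22 : P2 ω * P2 ω = P2 ω := by
    nth_rewrite 1 [P2]
    rw [Matrix.sub_mul, one_mul, h12, sub_zero]
  simp only [Fmat, Matrix.add_mul, Matrix.mul_add, Matrix.smul_mul, Matrix.mul_smul, h11, h12,
    h21, h22, smul_zero, add_zero, zero_add, smul_smul]

end

theorem stress_on_spherical_gradients_general
    (W : Mat3 → ℝ)
    (hWC1 : ContDiffOn ℝ 1 W {F : Mat3 | GLpos F})
    (hobj : Objective W) (hiso : Isotropic W) :
    ∀ l1 l2 : ℝ, 0 < l1 → 0 < l2 → ∀ ω : V3, ‖ω‖ = 1 →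
      PK W (Fmat l1 l2 ω)
        = (deriv (fun s => Lfun W s l2) l1) • P1 ω
          + ((1/2) * deriv (fun s => Lfun W l1 s) l2) • P2 ω ∧
      ((Fmat l1 l2 ω).det)⁻¹ • (PK W (Fmat l1 l2 ω) * (Fmat l1 l2 ω)ᵀ)
        = (l1 * l2 ^ 2)⁻¹ •
            ((l1 * deriv (fun s => Lfun W s l2) l1) • P1 ω
              + ((1/2) * (l2 * deriv (fun s => Lfun W l1 s) l2)) • P2 ω) := by
  intro l1 l2 hl1 hl2 ω hω
  have hPK := PK_Fmat hWC1 hobj hiso hl1 hl2 hω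
  refine ⟨hPK, ?_⟩
  rw [hPK, transpose_Fmat, smul_P1_add_smul_P2_mul_Fmat hω, det_Fmat hω, mul_left_comm l2]

/-- Formulas for the Piola–Kirchhoff and Cauchy stresses on spherically
symmetric deformation gradients in terms of the partial derivatives of `L`. -/
theorem stress_on_spherical_gradients
    (W : Mat3 → ℝ)
    (hW0 : ∀ F : Mat3, GLpos F → 0 ≤ W F)
    (hWC1 : ContDiffOn ℝ 1 W {F : Mat3 | GLpos F})
    (hobj : Objective W) (hiso : Isotropic W) :
    ∀ l1 l2 : ℝ, 0 < l1 → 0 < l2 → ∀ ω : V3, ‖ω‖ = 1 →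
      PK W (Fmat l1 l2 ω)
        = (deriv (fun s => Lfun W s l2) l1) • P1 ω
          + ((1/2) * deriv (fun s => Lfun W l1 s) l2) • P2 ω ∧
      ((Fmat l1 l2 ω).det)⁻¹ • (PK W (Fmat l1 l2 ω) * (Fmat l1 l2 ω)ᵀ)
        = (l1 * l2 ^ 2)⁻¹ •
            ((l1 * deriv (fun s => Lfun W s l2) l1) • P1 ω
              + ((1/2) * (l2 * deriv (fun s => Lfun W l1 s) l2)) • P2 ω) :=
  stress_on_spherical_gradients_general W hWC1 hobj hiso
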